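/- arXiv:2310.09222 — 3 statements merged into one kernel-verified Lean document; each statement's English description precedes it below -/
import Mathlib

section
/- If a joint distribution P is Markov with respect to a DAG G (factorizes as the product of conditional distributions of each node given its parents), then each variable is conditionally independent of any single non-parent non-descendant given its parents. -/
/-!
Let `S` be the set of nodes that are neither `i` nor descendants of `i`. It contains `j` and the
parents of `i`, and both `S` and `S ∪ {i}` are ancestral (closed under taking parents).
For an ancestral set `A`, the marginal of `P` on the coordinates in `A` is the product of the
factors of the nodes of `A`: the other factors can be summed out one at a time, always choosing a
node none of whose children is left, since its factor sums to `1` and no remaining factor mentions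
it. Comparing these marginals for `S ∪ {i}` and for `S`, every event `E` determined by the
coordinates in `S` on which the parents of `i` take the value `z` satisfies
`P(x i = a, E) = f i a z * P(E)`. Taking `E = {parents = z}` and `E = {parents = z, x j = b}`
gives the conditional independence.
-/

variable {V : Type*}

/-- A directed graph (given by its adjacency relation) is acyclic iff there is no
nonempty directed closed walk, i.e. the transitive closure is irreflexive. -/
def Acyclic (G : V → V → Prop) : Prop := ∀ v, ¬ Relation.TransGen G v v

/-- `Y` is a descendant of `X`: there is a nonempty directed path from `X` to `Y`. -/
def Descendant (G : V → V → Prop) (x y : V) : Prop := Relation.TransGen G x y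

/-- The parents of a node. -/
def Pa (G : V → V → Prop) (x : V) : Set V := {w | G w x}

/-- An (undirected) path between `x` and `y`: a list of distinct vertices starting at `x`,
ending at `y`, consecutive vertices adjacent in either direction, of length at least 2. -/
def IsTrail (G : V → V → Prop) (p : List V) (x y : V) : Prop :=
  p.Chain' (fun a b => G a b ∨ G b a) ∧ p.head? = some x ∧ p.getLast? = some y ∧
    p.Nodup ∧ 2 ≤ p.length

/-- A path is blocked by `Z` if it contains a non-collider belonging to `Z`, or a
collider `w` such that neither `w` nor any descendant of `w` belongs to `Z`. -/
def Blocked (G : V → V → Prop) (Z : Set V) (p : List V) : Prop :=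
  (∃ a w b, [a, w, b] <:+: p ∧ ¬(G a w ∧ G b w) ∧ w ∈ Z) ∨
  (∃ a w b, [a, w, b] <:+: p ∧ G a w ∧ G b w ∧ w ∉ Z ∧
    ∀ d, Relation.TransGen G w d → d ∉ Z)

/-- `Z` d-separates `x` and `y` iff every path between them is blocked by `Z`. -/
def DSep (G : V → V → Prop) (Z : Set V) (x y : V) : Prop :=
  ∀ p : List V, IsTrail G p x y → Blocked G Z p

open scoped Classical BigOperators

/-- Probability of an event under a pmf `p` on a finite sample space. -/
noncomputable def prSum {Ω : Type*} [Fintype Ω] (p : Ω → ℝ) (E : Ω → Prop) : ℝ :=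
  ∑ ω, if E ω then p ω else 0

/-- Conditional independence `X ⊥ Y | Z` under the pmf `p`. -/
def CondIndep {Ω α β γ : Type*} [Fintype Ω] (p : Ω → ℝ)
    (X : Ω → α) (Y : Ω → β) (Z : Ω → γ) : Prop :=
  ∀ (x : α) (y : β) (z : γ), 0 < prSum p (fun ω => Z ω = z) →
    prSum p (fun ω => X ω = x ∧ Y ω = y ∧ Z ω = z) / prSum p (fun ω => Z ω = z) =
      (prSum p (fun ω => X ω = x ∧ Z ω = z) / prSum p (fun ω => Z ω = z)) *
        (prSum p (fun ω => Y ω = y ∧ Z ω = z) / prSum p (fun ω => Z ω = z))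

theorem exists_of_prSum_ne_zero {Ω : Type*} [Fintype Ω] {p : Ω → ℝ} {E : Ω → Prop}
    (h : prSum p E ≠ 0) : ∃ ω, E ω := by
  by_contra! hE
  simp [prSum, hE] at h

theorem condIndep_of_prSum_and_eq_mul {Ω α β γ : Type*} [Fintype Ω] {p : Ω → ℝ}
    {X : Ω → α} {Y : Ω → β} {Z : Ω → γ}
    (h : ∀ x z, 0 < prSum p (fun ω => Z ω = z) → ∃ φ,
      prSum p (fun ω => X ω = x ∧ Z ω = z) = φ * prSum p (fun ω => Z ω = z) ∧
      ∀ y, prSum p (fun ω => X ω = x ∧ Y ω = y ∧ Z ω = z) =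
        φ * prSum p (fun ω => Y ω = y ∧ Z ω = z)) :
    CondIndep p X Y Z := by
  intro x y z hz
  obtain ⟨φ, hXZ, hXYZ⟩ := h x z hz
  rw [hXZ, hXYZ y]
  field_simp

section FactorizedPmf

variable {ι κ : Type*}

def IsAncestral (G : ι → ι → Prop) (A : Finset ι) : Prop := ∀ k ∈ A, Pa G k ⊆ A

def prodFactors (f : (i : ι) → κ → (ι → κ) → ℝ) (A : Finset ι) (x : ι → κ) : ℝ :=
  ∏ k ∈ A, f k (x k) x

variable {G : ι → ι → Prop} {f : (i : ι) → κ → (ι → κ) → ℝ}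

theorem Acyclic.exists_mem_forall_not_adj [Finite ι] (hG : Acyclic G) {s : Set ι}
    (hs : s.Nonempty) : ∃ m ∈ s, ∀ p ∈ s, ¬ G p m := by
  have : Std.Irrefl (Relation.TransGen G) := ⟨hG⟩
  obtain ⟨m, hm, hmin⟩ :=
    (Finite.wellFounded_of_trans_of_irrefl (Relation.TransGen G)).has_min s hs
  exact ⟨m, hm, fun p hp hpm => hmin p hp (.single hpm)⟩

theorem IsAncestral.insert [DecidableEq ι] {A : Finset ι} (hA : IsAncestral G A) {m : ι}
    (hm : Pa G m ⊆ A) : IsAncestral G (insert m A) := by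
  intro k hk
  rcases Finset.mem_insert.mp hk with rfl | hk
  · exact hm.trans (by simp)
  · exact (hA k hk).trans (by simp)

theorem isAncestral_filter_not_reflTransGen [Fintype ι] (G : ι → ι → Prop) (i : ι) :
    IsAncestral G (Finset.univ.filter fun k => ¬ Relation.ReflTransGen G i k) := by
  intro k hk p hp
  simp only [Finset.mem_coe, Finset.mem_filter, Finset.mem_univ, true_and] at hk ⊢
  exact fun hip => hk (hip.tail hp)

theorem IsAncestral.dependsOn_prodFactors (hlocal : ∀ i a, DependsOn (f i a) (Pa G i))
    {A : Finset ι} (hA : IsAncestral G A) : DependsOn (prodFactors f A) A := fun x y hxy =>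
  Finset.prod_congr rfl fun k hk => by
    rw [hxy k hk]
    exact hlocal k _ fun p hp => hxy p (hA k hk hp)

variable [Fintype ι] [DecidableEq ι] [Fintype κ]

open Finset

theorem card_mul_sum_apply_self {m : ι} (Φ : κ → (ι → κ) → ℝ)
    (hΦ : ∀ a, DependsOn (Φ a) {m}ᶜ) :
    Fintype.card κ * ∑ x, Φ (x m) x = ∑ x, ∑ a, Φ a x := by
  set e := (Equiv.funSplitAt m κ).symm
  have hswap : ∀ a b y, Φ a (e (b, y)) = Φ a (e (a, y)) := fun a b y =>
    hΦ a fun j hj => by simp [e, Set.mem_compl_singleton_iff.mp hj]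
  rw [sum_comm, ← e.sum_comp]
  simp_rw [← e.sum_comp (fun x => Φ _ x), Fintype.sum_prod_type, hswap]
  simp [e, mul_sum]

theorem card_mul_prSum_apply_eq_and {m : ι} (a : κ) {p : (ι → κ) → ℝ} {E : (ι → κ) → Prop}
    (hp : DependsOn p {m}ᶜ) (hE : DependsOn E {m}ᶜ) :
    Fintype.card κ * prSum p (fun x => x m = a ∧ E x) = prSum p E := by
  have key := card_mul_sum_apply_self (m := m) (fun b x => if b = a ∧ E x then p x else 0)
    fun b x y hxy => by simp only [hE hxy, hp hxy]
  unfold prSum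
  convert key using 4
  simp [ite_and]

theorem card_mul_prSum_prodFactors_insert (hf1 : ∀ i x, ∑ a, f i a x = 1)
    (hlocal : ∀ i a, DependsOn (f i a) (Pa G i)) {A : Finset ι} (hA : IsAncestral G A)
    {m : ι} (hm : m ∉ A) (hmm : ¬ G m m) {E : (ι → κ) → Prop} (hE : DependsOn E A) :
    Fintype.card κ * prSum (prodFactors f (insert m A)) E = prSum (prodFactors f A) E := by
  have hA' : DependsOn (prodFactors f A) {m}ᶜ :=
    (hA.dependsOn_prodFactors hlocal).mono (by simpa using hm)
  have key := card_mul_sum_apply_self (m := m)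
    (fun b x => if E x then f m b x * prodFactors f A x else 0) fun b x y hxy => by
      simp only [hE.mono (by simpa using hm) hxy, hA' hxy,
        hlocal m b fun p hp => hxy p (by rintro rfl; exact hmm hp)]
  simpa [prSum, prodFactors, prod_insert hm, ← sum_mul, hf1] using key

/-- `prodFactors f A` ignores the coordinates outside `A`, so each of them contributes a factor
`|κ|` to the sum rather than the `1` of a genuine marginal. -/
theorem prSum_prodFactors_of_isAncestral (hG : Acyclic G) (hf1 : ∀ i x, ∑ a, f i a x = 1)
    (hlocal : ∀ i a, DependsOn (f i a) (Pa G i)) {A : Finset ι} (hA : IsAncestral G A)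
    {E : (ι → κ) → Prop} (hE : DependsOn E A) :
    prSum (prodFactors f A) E = Fintype.card κ ^ #Aᶜ * prSum (prodFactors f univ) E := by
  induction hn : #Aᶜ generalizing A with
  | zero =>
    obtain rfl : A = univ := by simpa using hn
    simp
  | succ n ih =>
    obtain ⟨m, hmA, hmin⟩ := hG.exists_mem_forall_not_adj (s := ↑Aᶜ)
      (coe_nonempty.mpr (card_pos.mp (by omega)))
    replace hmA : m ∉ A := by simpa using hmA
    have hpa : Pa G m ⊆ A := fun p hp => by_contra fun hpA => hmin p (by simpa using hpA) hp
    have hn' : #(insert m A)ᶜ = n := by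
      rw [compl_insert, card_erase_of_mem (by simpa using hmA), hn, Nat.add_sub_cancel]
    rw [← card_mul_prSum_prodFactors_insert hf1 hlocal hA hmA (fun h => hmA (hpa h)) hE,
      ih (hA.insert hpa) (hE.mono (by simp)) hn', pow_succ]
    ring

theorem prSum_apply_eq_and_eq_mul (hG : Acyclic G) (hf1 : ∀ i x, ∑ a, f i a x = 1)
    (hlocal : ∀ i a, DependsOn (f i a) (Pa G i)) {S : Finset ι} (hS : IsAncestral G S)
    {i : ι} (hiS : i ∉ S) (hpa : Pa G i ⊆ S) {E : (ι → κ) → Prop} (hE : DependsOn E S)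
    {a : κ} {φ : ℝ} (hφ : ∀ x, E x → f i a x = φ) :
    prSum (prodFactors f univ) (fun x => x i = a ∧ E x) = φ * prSum (prodFactors f univ) E := by
  set c : ℝ := (Fintype.card κ : ℝ)
  have hc : c ≠ 0 := Nat.cast_ne_zero.mpr (Fintype.card_pos_iff.mpr ⟨a⟩).ne'
  have hN := hS.insert hpa
  have hiE : DependsOn (fun x => x i = a ∧ E x) ↑(insert i S) := fun x y hxy => by
    dsimp only
    rw [hxy i (by simp), hE fun k hk => hxy k (by simp [hk])]
  have hfactor : prSum (prodFactors f (insert i S)) (fun x => x i = a ∧ E x) =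
      φ * prSum (prodFactors f S) (fun x => x i = a ∧ E x) := by
    simp only [prSum, mul_sum]
    refine sum_congr rfl fun x _ => ?_
    split_ifs with h
    · rw [prodFactors, prod_insert hiS, h.1, hφ x h.2, prodFactors]
    · rw [mul_zero]
  have hS_i : DependsOn (prodFactors f S) {i}ᶜ :=
    (hS.dependsOn_prodFactors hlocal).mono (by simpa using hiS)
  refine mul_left_cancel₀ (mul_ne_zero hc (pow_ne_zero #(insert i S)ᶜ hc)) ?_
  calc c * c ^ #(insert i S)ᶜ * prSum (prodFactors f univ) (fun x => x i = a ∧ E x)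
      = c * prSum (prodFactors f (insert i S)) (fun x => x i = a ∧ E x) := by
        rw [prSum_prodFactors_of_isAncestral hG hf1 hlocal hN hiE, mul_assoc]
    _ = φ * prSum (prodFactors f S) E := by
        rw [hfactor, mul_left_comm, card_mul_prSum_apply_eq_and a hS_i (hE.mono (by simpa))]
    _ = φ * (c * prSum (prodFactors f (insert i S)) E) := by
        rw [card_mul_prSum_prodFactors_insert hf1 hlocal hS hiS (fun h => hiS (hpa h)) hE]
    _ = c * c ^ #(insert i S)ᶜ * (φ * prSum (prodFactors f univ) E) := by
        rw [prSum_prodFactors_of_isAncestral hG hf1 hlocal hN (hE.mono (by simp))]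
        ring

end FactorizedPmf

theorem markov_of_factorization_general {ι κ : Type*} [Fintype ι] [DecidableEq ι]
    [Fintype κ]
    (G : ι → ι → Prop) (hG : Acyclic G)
    (P : (ι → κ) → ℝ) (f : (i : ι) → κ → (ι → κ) → ℝ)
    (hf1 : ∀ (i : ι) (x : ι → κ), ∑ a : κ, f i a x = 1)
    (hlocal : ∀ (i : ι) (a : κ) (x x' : ι → κ),
      (∀ j, G j i → x j = x' j) → f i a x = f i a x')
    (hfac : ∀ x : ι → κ, P x = ∏ i, f i (x i) x)
    (i j : ι) (hij : j ≠ i) (hnd : ¬ Descendant G i j) :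
    CondIndep P (fun x => x i) (fun x => x j)
      (fun x => fun k : {k : ι // G k i} => x k.1) := by
  obtain rfl : P = prodFactors f Finset.univ := funext hfac
  set S := Finset.univ.filter fun k => ¬ Relation.ReflTransGen G i k
  have hiS : i ∉ S := by simp [S, Relation.ReflTransGen.refl]
  have hjS : j ∈ S := by
    simpa [S, Descendant, Relation.reflTransGen_iff_eq_or_transGen, hij] using hnd
  have hpa : Pa G i ⊆ S := fun p hp => by
    simpa [S] using fun hip => hG i (.tail' hip hp)
  set Z : (ι → κ) → ({k : ι // G k i} → κ) := fun x k => x k.1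
  have hZ : DependsOn Z S := fun x y hxy => funext fun k => hxy k (hpa k.2)
  have hS := isAncestral_filter_not_reflTransGen G i
  refine condIndep_of_prSum_and_eq_mul fun a z hz => ?_
  obtain ⟨x₀, hx₀⟩ := exists_of_prSum_ne_zero hz.ne'
  have hφ : ∀ x, Z x = z → f i a x = f i a x₀ :=
    fun x hx => hlocal i a x x₀ fun p hp => congrFun (hx.trans hx₀.symm) ⟨p, hp⟩
  refine ⟨f i a x₀,
    prSum_apply_eq_and_eq_mul hG hf1 hlocal hS hiS hpa (fun x y hxy => by rw [hZ hxy]) hφ,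
    fun b => prSum_apply_eq_and_eq_mul hG hf1 hlocal hS hiS hpa ?_ fun x hx => hφ x hx.2⟩
  exact fun x y hxy => by rw [hxy j hjS, hZ hxy]

/-- If a joint pmf factorizes according to a DAG `G` as the product of conditional
distributions of each node given its parents, then each variable is conditionally
independent of any single non-parent non-descendant given its parents. -/
theorem markov_of_factorization {ι κ : Type*} [Fintype ι] [DecidableEq ι]
    [Fintype κ] [Nonempty κ]
    (G : ι → ι → Prop) (hG : Acyclic G)
    (P : (ι → κ) → ℝ) (f : (i : ι) → κ → (ι → κ) → ℝ)
    (hnn : ∀ x, 0 ≤ P x) (hsum : ∑ x : ι → κ, P x = 1)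
    (hfnn : ∀ i a x, 0 ≤ f i a x)
    (hf1 : ∀ (i : ι) (x : ι → κ), ∑ a : κ, f i a x = 1)
    (hlocal : ∀ (i : ι) (a : κ) (x x' : ι → κ),
      (∀ j, G j i → x j = x' j) → f i a x = f i a x')
    (hfac : ∀ x : ι → κ, P x = ∏ i, f i (x i) x)
    (i j : ι) (hij : j ≠ i) (hnp : ¬ G j i) (hnd : ¬ Descendant G i j) :
    CondIndep P (fun x => x i) (fun x => x j)
      (fun x => fun k : {k : ι // G k i} => x k.1) :=
  markov_of_factorization_general G hG P f hf1 hlocal hfac i j hij hnd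
end

section
/- In a DAG, if X and Y are not adjacent and Y is not a descendant of X, then Pa(X), the parent set of X, d-separates X from Y. -/
variable {V : Type*}

theorem transGen_or_exists_collider (G : V → V → Prop) (y : V) :
    ∀ (q : List V) (a b : V), (a :: b :: q).IsChain (fun u v => G u v ∨ G v u) → G a b →
      (a :: b :: q).getLast? = some y →
      Relation.TransGen G a y ∨
        ∃ a' w b', [a', w, b'] <:+: a :: b :: q ∧ G a' w ∧ G b' w ∧ Relation.TransGen G a w
  | [], a, b, _, hab, hlast => by
    simp only [List.getLast?_cons_cons, List.getLast?_singleton, Option.some.injEq] at hlast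
    exact .inl (hlast ▸ .single hab)
  | c :: q, a, b, hchain, hab, hlast => by
    obtain ⟨-, hchain'⟩ := List.isChain_cons_cons.mp hchain
    rcases (List.isChain_cons_cons.mp hchain').1 with hbc | hcb
    · rw [List.getLast?_cons_cons] at hlast
      rcases transGen_or_exists_collider G y q b c hchain' hbc hlast with
        hby | ⟨a', w, b', hsub, haw, hbw, hbw'⟩
      · exact .inl (.head hab hby)
      · exact .inr ⟨a', w, b', hsub.trans (List.suffix_cons a _).isInfix, haw, hbw,
          .head hab hbw'⟩
    · exact .inr ⟨a, b, c, ⟨[], q, rfl⟩, hab, hcb, .single hab⟩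

theorem Acyclic.not_mem_pa_of_transGen {G : V → V → Prop} (hG : Acyclic G) {x w : V}
    (hxw : Relation.TransGen G x w) : w ∉ Pa G x :=
  fun hwx => hG x (hxw.tail hwx)

theorem Acyclic.asymm {G : V → V → Prop} (hG : Acyclic G) {a b : V} (hab : G a b) : ¬ G b a :=
  fun hba => hG a (.tail (.single hab) hba)

theorem pa_dsep_general (G : V → V → Prop) (hG : Acyclic G)
    (x y : V) (hnadj : ¬ G x y ∧ ¬ G y x)
    (hnd : ¬ Descendant G x y) :
    DSep G (Pa G x) x y := by
  rintro (_ | ⟨x', _ | ⟨w, rest⟩⟩) ⟨hchain, hhead, hlast, -, hlen⟩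
  · simp at hlen
  · simp at hlen
  obtain rfl : x = x' := by simpa using hhead.symm
  rcases (List.isChain_cons_cons.mp hchain).1 with hxw | hwx
  · -- `x → w`: the first collider descends from `x`, so neither it nor its descendants
    -- can be parents of `x` without a cycle
    rcases transGen_or_exists_collider G y rest x w hchain hxw hlast with
      hxy | ⟨a, c, b, hsub, hac, hbc, hxc⟩
    · exact absurd hxy hnd
    · exact .inr ⟨a, c, b, hsub, hac, hbc, hG.not_mem_pa_of_transGen hxc,
        fun d hcd => hG.not_mem_pa_of_transGen (hxc.trans hcd)⟩
  · -- `w → x`: `w` is a parent of `x` and, by acyclicity, a non-collider; `w = y` is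
    -- excluded by non-adjacency
    rcases rest with _ | ⟨b, rest⟩
    · simp only [List.getLast?_cons_cons, List.getLast?_singleton, Option.some.injEq] at hlast
      exact absurd (hlast ▸ hwx) hnadj.2
    · exact .inl ⟨x, w, b, ⟨[], rest, rfl⟩, fun h => hG.asymm h.1 hwx, hwx⟩

/-- In a DAG, if `x` and `y` are not adjacent and `y` is not a descendant of `x`,
then `Pa(x)` d-separates `x` from `y`. -/
theorem pa_dsep [Fintype V] (G : V → V → Prop) (hG : Acyclic G)
    (x y : V) (hxy : x ≠ y) (hnadj : ¬ G x y ∧ ¬ G y x)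
    (hnd : ¬ Descendant G x y) :
    DSep G (Pa G x) x y :=
  pa_dsep_general G hG x y hnadj hnd
end

section
/- False-edge removal (Lemma 5): under faithfulness, if X and Y are non-adjacent in the true DAG, then at least one of the two calls—local search around X with candidate sets drawn from the potential neighbors of X, or around Y with candidate sets from the potential neighbors of Y—finds a d-separating set, because either Pa(X) or Pa(Y) d-separates X and Y and is contained in the respective candidate neighbor set. -/
variable {V : Type*}

/-! If `y` is not a descendant of `x`, then `Pa G x` d-separates `x` and `y` (and symmetrically);
by acyclicity one of the two cases applies. A path leaving `x` through a parent `v` is blocked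
at the non-collider `v ∈ Pa G x`. A path leaving `x` through a child keeps following edges
forward for as long as it can; since it ends at the non-descendant `y`, it must turn back at
some vertex, which is then a collider that is a descendant of `x`, so neither it nor any of its
descendants is a parent of `x`. -/

variable {G : V → V → Prop} {Z : Set V}

lemma Acyclic.not_mem_pa_of_descendant (hG : Acyclic G) {x d : V} (hd : Descendant G x d) :
    d ∉ Pa G x :=
  fun hdx => hG x (hd.tail hdx)

lemma Blocked.of_infix {s p : List V} (h : Blocked G Z s) (hsp : s <:+: p) : Blocked G Z p := by
  rcases h with ⟨a, w, b, hi, hcoll, hw⟩ | ⟨a, w, b, hi, haw, hbw, hw, hdesc⟩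
  · exact Or.inl ⟨a, w, b, hi.trans hsp, hcoll, hw⟩
  · exact Or.inr ⟨a, w, b, hi.trans hsp, haw, hbw, hw, hdesc⟩

lemma Blocked.of_reverse {p : List V} (h : Blocked G Z p.reverse) : Blocked G Z p := by
  have hrev {a w b : V} (hi : [a, w, b] <:+: p.reverse) : [b, w, a] <:+: p := by
    simpa using hi.reverse
  rcases h with ⟨a, w, b, hi, hcoll, hw⟩ | ⟨a, w, b, hi, haw, hbw, hw, hdesc⟩
  · exact Or.inl ⟨b, w, a, hrev hi, fun h => hcoll h.symm, hw⟩
  · exact Or.inr ⟨b, w, a, hrev hi, hbw, haw, hw, hdesc⟩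

lemma IsTrail.reverse {p : List V} {x y : V} (h : IsTrail G p x y) : IsTrail G p.reverse y x := by
  obtain ⟨hchain, hhead, hlast, hnodup, hlen⟩ := h
  refine ⟨?_, by simpa using hlast, by simpa using hhead, by simpa using hnodup, by simpa using hlen⟩
  exact List.isChain_reverse.mpr (hchain.imp fun _ _ => Or.symm)

lemma DSep.symm {x y : V} (h : DSep G Z y x) : DSep G Z x y :=
  fun p hp => (h p.reverse hp.reverse).of_reverse

lemma blocked_pa_of_edge_to_descendant (hG : Acyclic G) {x y : V} (hy : ¬ Descendant G x y)
    (q : List V) {a b : V} (hab : G a b) (hb : Descendant G x b)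
    (hchain : (a :: b :: q).IsChain (fun u v => G u v ∨ G v u))
    (hlast : (a :: b :: q).getLast? = some y) :
    Blocked G (Pa G x) (a :: b :: q) := by
  induction q generalizing a b with
  | nil =>
    obtain rfl : b = y := by simpa using hlast
    exact absurd hb hy
  | cons c q ih =>
    have hrest := (List.isChain_cons_cons.mp hchain).2
    rcases (List.isChain_cons_cons.mp hrest).1 with hbc | hcb
    · exact (ih hbc (hb.tail hbc) hrest (by simpa using hlast)).of_infix
        (List.suffix_cons a _).isInfix
    · exact Or.inr ⟨a, b, c, ⟨[], q, rfl⟩, hab, hcb, hG.not_mem_pa_of_descendant hb,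
        fun d hd => hG.not_mem_pa_of_descendant (hb.trans hd)⟩

lemma dsep_pa_of_not_descendant (hG : Acyclic G) {x y : V} (hxy : ¬ G x y) (hyx : ¬ G y x)
    (hy : ¬ Descendant G x y) : DSep G (Pa G x) x y := by
  rintro (_ | ⟨a, _ | ⟨v, t⟩⟩) ⟨hchain, hhead, hlast, -, hlen⟩
  · simp at hlen
  · simp at hlen
  obtain rfl : a = x := by simpa using hhead
  rcases (List.isChain_cons_cons.mp hchain).1 with hav | hva
  · exact blocked_pa_of_edge_to_descendant hG hy t hav (.single hav) hchain hlast
  · rcases t with _ | ⟨w, t⟩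
    · obtain rfl : v = y := by simpa using hlast
      exact absurd hva hyx
    · exact Or.inl ⟨a, v, w, ⟨[], t, rfl⟩,
        fun h => hG.not_mem_pa_of_descendant (.single h.1) hva, hva⟩

theorem false_edge_removed_general (G : V → V → Prop) (hG : Acyclic G)
    (x y : V) (hnadj : ¬ G x y ∧ ¬ G y x)
    (Cx Cy : Set V) (hCx : Pa G x ⊆ Cx) (hCy : Pa G y ⊆ Cy) :
    (∃ Z ⊆ Cx, DSep G Z x y) ∨ (∃ Z ⊆ Cy, DSep G Z x y) := by
  by_cases hdesc : Descendant G x y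
  · have hyx : ¬ Descendant G y x := fun h => hG x (hdesc.trans h)
    exact Or.inr ⟨Pa G y, hCy, (dsep_pa_of_not_descendant hG hnadj.2 hnadj.1 hyx).symm⟩
  · exact Or.inl ⟨Pa G x, hCx, dsep_pa_of_not_descendant hG hnadj.1 hnadj.2 hdesc⟩

/-- False-edge removal (Lemma 5): if `x` and `y` are non-adjacent in the true DAG,
and the candidate neighbor sets around `x` and around `y` contain the respective
true parents, then one of the two local searches finds a d-separating set. -/
theorem false_edge_removed [Fintype V] (G : V → V → Prop) (hG : Acyclic G)
    (x y : V) (hxy : x ≠ y) (hnadj : ¬ G x y ∧ ¬ G y x)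
    (Cx Cy : Set V) (hCx : Pa G x ⊆ Cx) (hCy : Pa G y ⊆ Cy) :
    (∃ Z ⊆ Cx, DSep G Z x y) ∨ (∃ Z ⊆ Cy, DSep G Z x y) :=
  false_edge_removed_general G hG x y hnadj Cx Cy hCx hCy
end
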